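/- Let d ∈ ℕ and let c_n = (2n+1)!!/(2n)!! = (2n+1)!/(4ⁿ·(n!)²). Then for every real x with |x| < 1, |(1 − x)^{−3/2} − Σ_{n=0}^{d} c_n xⁿ| ≤ c_{d+1} · |x|^{d+1} / (1 − |x|)^{d + 5/2}. -/

import Mathlib

/-!
Taylor's theorem with Lagrange remainder at `0`. The `n`-th derivative of `(1 - z)^(-a)` is
`(a)ₙ (1 - z)^(-a-n)`, with `(a)ₙ` the rising factorial, so the remainder after degree `d` is
`(a)_{d+1} / (d+1)! · x^(d+1) · (1 - ξ)^(-a-d-1)` for some `ξ` between `0` and `x`, and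
`1 - ξ ≥ 1 - |x|`. For `a = 3/2` the Taylor coefficients `(3/2)ₙ / n!` are the `cₙ`.
-/

open Set
open scoped Nat

lemma iteratedDeriv_one_sub_rpow_neg (a : ℝ) (n : ℕ) (t : ℝ) :
    iteratedDeriv n (fun z : ℝ => (1 - z) ^ (-a)) t =
      (ascPochhammer ℝ n).eval a * (1 - t) ^ (-a - n) := by
  rw [iteratedDeriv_comp_const_sub n (fun u : ℝ => u ^ (-a)) 1, iteratedDeriv_eq_iterate]
  dsimp only
  rw [Real.iter_deriv_rpow_const, ← neg_neg a, ascPochhammer_eval_neg_eq_descPochhammer, neg_neg,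
    smul_eq_mul, mul_assoc]

lemma contDiffAt_one_sub_rpow {p t : ℝ} (ht : t < 1) (n : ℕ) :
    ContDiffAt ℝ n (fun z : ℝ => (1 - z) ^ p) t :=
  (Real.contDiffAt_rpow_const_of_ne (by linarith)).comp t (contDiffAt_const.sub contDiffAt_id)

lemma taylorWithinEval_one_sub_rpow_neg (a : ℝ) (d : ℕ) {x : ℝ} (hx : x ≠ 0) :
    taylorWithinEval (fun z : ℝ => (1 - z) ^ (-a)) d (uIcc 0 x) 0 x =
      ∑ n ∈ Finset.range (d + 1), (ascPochhammer ℝ n).eval a / n ! * x ^ n := by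
  rw [taylor_within_apply]
  refine Finset.sum_congr rfl fun n _ => ?_
  rw [iteratedDerivWithin_eq_iteratedDeriv (uniqueDiffOn_uIcc hx.symm)
      (contDiffAt_one_sub_rpow zero_lt_one n) left_mem_uIcc, iteratedDeriv_one_sub_rpow_neg]
  simp only [sub_zero, Real.one_rpow, smul_eq_mul]
  ring

theorem abs_one_sub_rpow_neg_sub_taylor_le {a : ℝ} (ha : 0 < a) (d : ℕ) {x : ℝ} (hx : |x| < 1) :
    |(1 - x) ^ (-a) - ∑ n ∈ Finset.range (d + 1), (ascPochhammer ℝ n).eval a / n ! * x ^ n| ≤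
      (ascPochhammer ℝ (d + 1)).eval a / (d + 1)! * |x| ^ (d + 1) / (1 - |x|) ^ (a + (d + 1)) := by
  rcases eq_or_ne x 0 with rfl | hx0
  · simp [Finset.sum_range_succ']
  have habs : ∀ z ∈ uIcc 0 x, |z| ≤ |x| := fun z hz => by
    simpa using abs_sub_left_of_mem_uIcc hz
  have hcd : ContDiffOn ℝ (d + 1) (fun z : ℝ => (1 - z) ^ (-a)) (uIcc 0 x) := fun z hz =>
    (contDiffAt_one_sub_rpow (by linarith [le_abs_self z, habs z hz]) (d + 1)).contDiffWithinAt
  obtain ⟨ξ, hξ, hrem⟩ := taylor_mean_remainder_lagrange_iteratedDeriv hx0.symm hcd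
  rw [taylorWithinEval_one_sub_rpow_neg a d hx0] at hrem
  rw [hrem, iteratedDeriv_one_sub_rpow_neg, sub_zero]
  have hξx : |ξ| ≤ |x| := habs ξ (uIoo_subset_uIcc_self hξ)
  have hξ1 : 0 < 1 - ξ := by linarith [le_abs_self ξ]
  have hx1 : 0 < 1 - |x| := by linarith
  have hdecay : (1 - ξ) ^ (-a - (d + 1 : ℕ)) ≤ ((1 - |x|) ^ (a + (d + 1)))⁻¹ := by
    rw [← Real.rpow_neg hx1.le]
    exact Real.rpow_le_rpow_of_nonpos hx1 (by linarith [le_abs_self ξ]) (by push_cast; linarith)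
      |>.trans_eq (by push_cast; ring_nf)
  have hP : 0 < (ascPochhammer ℝ (d + 1)).eval a := ascPochhammer_pos _ _ ha
  rw [abs_div, abs_mul, abs_mul, abs_pow, abs_of_pos hP, abs_of_pos (Real.rpow_pos_of_pos hξ1 _),
    abs_of_pos (by positivity : (0 : ℝ) < (d + 1)!)]
  calc _ = (ascPochhammer ℝ (d + 1)).eval a / (d + 1)! * |x| ^ (d + 1) *
        (1 - ξ) ^ (-a - (d + 1 : ℕ)) := by ring
    _ ≤ _ := by rw [div_eq_mul_inv _ ((1 - |x|) ^ _)]; gcongr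

lemma ascPochhammer_eval_three_halves (n : ℕ) :
    (ascPochhammer ℝ n).eval (3 / 2) = (2 * n + 1)! / (4 ^ n * n !) := by
  induction n with
  | zero => simp
  | succ n ih =>
    rw [ascPochhammer_succ_eval, ih, show 2 * (n + 1) + 1 = (2 * n + 1) + 1 + 1 by ring,
      Nat.factorial_succ (2 * n + 1 + 1), Nat.factorial_succ (2 * n + 1), Nat.factorial_succ n]
    push_cast
    field_simp
    ring

theorem stmt12 (d : ℕ) (x : ℝ) (hx : |x| < 1) :
    |(1 - x) ^ (-(3 / 2 : ℝ)) -
        ∑ n ∈ Finset.range (d + 1),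
          ((Nat.factorial (2 * n + 1) : ℝ) /
            (4 ^ n * (Nat.factorial n : ℝ) ^ 2)) * x ^ n| ≤
      ((Nat.factorial (2 * (d + 1) + 1) : ℝ) /
          (4 ^ (d + 1) * (Nat.factorial (d + 1) : ℝ) ^ 2)) *
        |x| ^ (d + 1) / (1 - |x|) ^ ((d : ℝ) + 5 / 2) := by
  have hcoeff (n : ℕ) :
      (ascPochhammer ℝ n).eval (3 / 2) / n ! = (2 * n + 1)! / (4 ^ n * (n ! : ℝ) ^ 2) := by
    rw [ascPochhammer_eval_three_halves]
    field_simp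
  have hexp : (3 / 2 : ℝ) + (d + 1) = d + 5 / 2 := by ring
  simpa only [hcoeff, hexp] using abs_one_sub_rpow_neg_sub_taylor_le (a := 3 / 2) (by norm_num) d hx
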